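/- Let G be a finite graph, q ≥ 1 an integer, with interaction energies J_e ∈ ℂ on edges and field vectors M_i = (M_{i,1},…,M_{i,q}) ∈ ℂ^q on vertices v_i. Define the Potts partition function Z_ext(G) = Σ_{σ: V(G)→{1,…,q}} exp(β Σ_{{i,j}∈E} J_{ij} δ(σ_i,σ_j) + β Σ_i Σ_{α=1}^q M_{i,α} δ(α,σ_i)). Then Z_ext(G) equals the evaluation of the V-polynomial: Z_ext(G) = V(G, ω; {X_M}_{M∈ℂ^q}, {e^{βJ_e} − 1}_{e∈E(G)}), where the vertex-weight monoid is (ℂ^q, +), ω(v_i) = M_i, and the variable x_M is evaluated at X_M = Σ_{α=1}^q e^{β M_α}. -/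

import Mathlib

open scoped Classical
open Finset

structure PGraph (V E : Type) where
  ends : E → Sym2 V

namespace PGraph

variable {V E S R : Type} [Fintype V] [Fintype E]

/-- Two vertices are joined by an edge of `A`. -/
def adjRel (G : PGraph V E) (A : Finset E) (u v : V) : Prop :=
  ∃ e ∈ A, G.ends e = s(u, v)

/-- The setoid on vertices whose classes are the connected components of the
spanning subgraph `(V, A)`. -/
def compSetoid (G : PGraph V E) (A : Finset E) : Setoid V :=
  ⟨Relation.EqvGen (G.adjRel A), Relation.EqvGen.is_equivalence _⟩

/-- The connected components of the spanning subgraph `(V, A)`. -/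
def Comp (G : PGraph V E) (A : Finset E) : Type := Quotient (G.compSetoid A)

noncomputable instance (G : PGraph V E) (A : Finset E) : Fintype (G.Comp A) :=
  @Quotient.fintype V _ (G.compSetoid A) (Classical.decRel _)

/-- `k(A)`: the number of connected components of the spanning subgraph `(V, A)`. -/
noncomputable def kA (G : PGraph V E) (A : Finset E) : ℕ := Nat.card (G.Comp A)

/-- `u` and `v` are connected in the spanning subgraph `(V, A)`. -/
def Connects (G : PGraph V E) (A : Finset E) (u v : V) : Prop :=
  Relation.EqvGen (G.adjRel A) u v

/-- The endpoints of `e` are connected in the spanning subgraph `(V, A)`. -/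
def EndsConnected (G : PGraph V E) (A : Finset E) (e : E) : Prop :=
  ∃ u v, G.ends e = s(u, v) ∧ G.Connects A u v

def IsLoop (G : PGraph V E) (e : E) : Prop := (G.ends e).IsDiag

/-- `(V, A)` is a forest (acyclic spanning subgraph): every edge of `A` is a bridge of it. -/
def IsForest (G : PGraph V E) (A : Finset E) : Prop :=
  ∀ e ∈ A, ¬ G.EndsConnected (A.erase e) e

/-- All vertices are pairwise connected using edges of `A`. -/
def ConnectsAll (G : PGraph V E) (A : Finset E) : Prop := ∀ u v, G.Connects A u v

/-- A maximal spanning forest: a forest restricting to a spanning tree of each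
connected component of `G`. -/
def IsSpanningTree (G : PGraph V E) (T : Finset E) : Prop :=
  G.IsForest T ∧ ∀ u v, G.Connects T u v ↔ G.Connects Finset.univ u v

/-- `e ∈ T` is internally active: `e` is minimal in the cut
`{f : (T - e) ∪ {f} ∈ 𝒯(G)}`. -/
def IntActive [LinearOrder E] (G : PGraph V E) (T : Finset E) (e : E) : Prop :=
  e ∈ T ∧ ∀ f, G.IsSpanningTree (insert f (T.erase e)) → e ≤ f

/-- The edge set of the unique cycle of `T ∪ {e}` (when it exists):
`e` together with those `f ∈ T` whose removal disconnects the ends of `e`. -/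
noncomputable def cycleEdges (G : PGraph V E) (T : Finset E) (e : E) : Finset E :=
  insert e (T.filter fun f => ¬ G.EndsConnected (T.erase f) e)

/-- `e ∉ T` is externally active: `T ∪ {e}` contains a cycle through `e` and
`e` is the minimal edge of that cycle. -/
def ExtActive [LinearOrder E] (G : PGraph V E) (T : Finset E) (e : E) : Prop :=
  e ∉ T ∧ G.EndsConnected T e ∧ ∀ f ∈ G.cycleEdges T e, e ≤ f

/-- The vertex set of the component `c` of `(V, A)`. -/
noncomputable def compVerts (G : PGraph V E) (A : Finset E) (c : G.Comp A) : Finset V :=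
  Finset.univ.filter fun v => (Quotient.mk (G.compSetoid A) v) = c

/-- The total vertex weight of the component `c` of `(V, A)`. -/
noncomputable def compWeight [AddCommMonoid S] (G : PGraph V E) (A : Finset E)
    (ω : V → S) (c : G.Comp A) : S :=
  ∑ v ∈ G.compVerts A c, ω v

/-- The V-polynomial, defined by its state sum. -/
noncomputable def Vpoly [AddCommMonoid S] [CommRing R] (G : PGraph V E)
    (ω : V → S) (γ : E → R) : MvPolynomial S R :=
  ∑ A : Finset E, (∏ c : G.Comp A, MvPolynomial.X (G.compWeight A ω c)) *
    MvPolynomial.C (∏ e ∈ A, γ e)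

/-- The multivariate Tutte polynomial `Z_T(G; q, γ)` as a polynomial in `q`. -/
noncomputable def ZT [CommRing R] (G : PGraph V E) (γ : E → R) : Polynomial R :=
  ∑ A : Finset E, Polynomial.X ^ (G.kA A) * Polynomial.C (∏ e ∈ A, γ e)

/-- Deletion of the edge `e`. -/
def del (G : PGraph V E) (e : E) : PGraph V {f : E // f ≠ e} := ⟨fun f => G.ends f.1⟩

/-- Contraction of the edge `e`: vertices are the components of `(V, {e})`. -/
noncomputable def contract (G : PGraph V E) (e : E) : PGraph (G.Comp {e}) {f : E // f ≠ e} :=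
  ⟨fun f => (G.ends f.1).map (Quotient.mk (G.compSetoid {e}))⟩

/-- The forest `T` with the edges of `B` contracted: vertices are the components
of `(V, B)` and edges are `T \ B`. -/
noncomputable def contractIn (G : PGraph V E) (T B : Finset E) :
    PGraph (G.Comp B) ↥(T \ B : Finset E) :=
  ⟨fun f => (G.ends f.1).map (Quotient.mk (G.compSetoid B))⟩

/-- The edges of `G` with both ends inside `P`. -/
noncomputable def edgesIn (G : PGraph V E) (P : Finset V) : Finset E :=
  Finset.univ.filter fun e => ∀ v ∈ G.ends e, v ∈ P

/-- The subgraph of `G` induced by the vertex set `P`. -/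
noncomputable def induce (G : PGraph V E) (P : Finset V) : PGraph ↥P ↥(G.edgesIn P) :=
  ⟨fun e => (G.ends e.1).pmap (fun v hv => (⟨v, hv⟩ : ↥P))
    (by have he := e.2; simp only [edgesIn, Finset.mem_filter] at he; exact he.2)⟩

/-- The block `B` induces a connected subgraph of `G`. -/
def BlockConnected (G : PGraph V E) (B : Finset V) : Prop :=
  ∀ u ∈ B, ∀ v ∈ B, Relation.EqvGen (G.adjRel (G.edgesIn B)) u v

/-- A connected partition of `V(G)`: every vertex lies in exactly one block,
blocks are nonempty, and each block induces a connected subgraph. -/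
def IsConnectedPartition (G : PGraph V E) (P : Finset (Finset V)) : Prop :=
  (∀ B ∈ P, B.Nonempty) ∧ (∀ v : V, ∃! B, B ∈ P ∧ v ∈ B) ∧ ∀ B ∈ P, G.BlockConnected B

/-- The partition `Π(A)` of `V(G)` into the components of `(V, A)`. -/
noncomputable def partitionOf (G : PGraph V E) (A : Finset E) : Finset (Finset V) :=
  Finset.univ.image fun c : G.Comp A => G.compVerts A c

/-- The internally inactive edges of the spanning tree `T`. -/
noncomputable def intInactives [LinearOrder E] (G : PGraph V E) (T : Finset E) : Finset E :=
  T.filter fun e => ¬ G.IntActive T e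

/-- The internally active edges of the spanning tree `T`. -/
noncomputable def intActives [LinearOrder E] (G : PGraph V E) (T : Finset E) : Finset E :=
  T.filter fun e => G.IntActive T e

/-- The externally active edges w.r.t. the spanning tree / forest `T`. -/
noncomputable def extActives [LinearOrder E] (G : PGraph V E) (T : Finset E) : Finset E :=
  Finset.univ.filter fun e => G.ExtActive T e

/-- Kronecker delta `δ(σ_i, σ_j)` for the two ends of the edge `e`. -/
noncomputable def edgeDelta (G : PGraph V E) {q : ℕ} (σ : V → Fin q) (e : E) : ℂ :=
  Sym2.lift ⟨fun u v => if σ u = σ v then 1 else 0, fun u v => by simp [eq_comm]⟩ (G.ends e)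

/-- The Potts partition function with variable interactions `J` and
field vectors `M`. -/
noncomputable def Zext (G : PGraph V E) (q : ℕ) (β : ℂ) (J : E → ℂ) (M : V → Fin q → ℂ) : ℂ :=
  ∑ σ : V → Fin q, Complex.exp (β * ((∑ e : E, J e * G.edgeDelta σ e) +
    ∑ v : V, ∑ α : Fin q, M v α * (if α = σ v then 1 else 0)))

/-- The Potts partition function with constant interaction `J` and constant
field `H` favouring the first spin. -/
noncomputable def ZconstField (G : PGraph V E) (q : ℕ) (β J H : ℂ) : ℂ :=
  ∑ σ : V → Fin q, Complex.exp (β * (J * (∑ e : E, G.edgeDelta σ e) +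
    H * ∑ v : V, (if (σ v : ℕ) = 0 then (1 : ℂ) else 0)))

/-- The zero-field Potts partition function with constant interaction `J`. -/
noncomputable def Zzero (G : PGraph V E) (q : ℕ) (β J : ℂ) : ℂ :=
  ∑ σ : V → Fin q, Complex.exp (β * J * ∑ e : E, G.edgeDelta σ e)

end PGraph

/-!
Expanding each edge factor as `e^{β J_e δ} = 1 + (e^{β J_e} − 1) δ` (Fortuin–Kasteleyn) turns the
Boltzmann weight of a state into a sum over edge sets `A`. For fixed `A`, the product of the
deltas over `A` is the indicator that the state is constant on every component of `(V, A)`, so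
the sum over states becomes a sum over colourings of the components; the field factors of a
component `C` coloured `α` multiply to `e^{β ω(C)_α}`, and summing over `α` gives `X_{ω(C)}`.
-/

namespace PGraph

lemma eval_Vpoly {V E S R : Type} [Fintype V] [Fintype E] [AddCommMonoid S] [CommRing R]
    (G : PGraph V E) (x : S → R) (ω : V → S) (γ : E → R) :
    MvPolynomial.eval x (G.Vpoly ω γ) =
      ∑ A : Finset E, (∏ c, x (G.compWeight A ω c)) * ∏ e ∈ A, γ e := by
  simp [Vpoly]

variable {V E : Type} (G : PGraph V E)

lemma compSetoid_le_ker_iff {α : Type} (A : Finset E) (σ : V → α) :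
    G.compSetoid A ≤ Setoid.ker σ ↔ ∀ e ∈ A, ((G.ends e).map σ).IsDiag := by
  constructor
  · intro h e he
    induction hends : G.ends e using Sym2.ind with
    | _ u v => simpa using h (Relation.EqvGen.rel _ _ ⟨e, he, hends⟩)
  · intro h
    refine Setoid.eqvGen_le fun u v ⟨e, he, hends⟩ => ?_
    simpa [hends] using h e he

lemma edgeDelta_eq_ite {q : ℕ} (σ : V → Fin q) (e : E) :
    G.edgeDelta σ e = if ((G.ends e).map σ).IsDiag then 1 else 0 := by
  rw [edgeDelta]
  induction G.ends e using Sym2.ind with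
  | _ u v => simp

lemma exp_mul_edgeDelta {q : ℕ} (σ : V → Fin q) (x : ℂ) (e : E) :
    Complex.exp (x * G.edgeDelta σ e) = 1 + (Complex.exp x - 1) * G.edgeDelta σ e := by
  rw [edgeDelta_eq_ite]
  split_ifs <;> simp

lemma prod_edgeDelta {q : ℕ} (A : Finset E) (σ : V → Fin q) :
    ∏ e ∈ A, G.edgeDelta σ e = if G.compSetoid A ≤ Setoid.ker σ then 1 else 0 := by
  simp_rw [edgeDelta_eq_ite, G.compSetoid_le_ker_iff A σ]
  convert prod_boole

variable [Fintype V]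

lemma prod_exp_compWeight {q : ℕ} (A : Finset E) (M : V → Fin q → ℂ) (β : ℂ)
    (τ : G.Comp A → Fin q) :
    ∏ c, Complex.exp (β * G.compWeight A M c (τ c)) =
      ∏ v, Complex.exp (β * M v (τ (Quotient.mk (G.compSetoid A) v))) := by
  rw [← prod_fiberwise univ (Quotient.mk (G.compSetoid A))]
  refine prod_congr rfl fun c _ => ?_
  rw [compWeight, compVerts, Finset.sum_apply, mul_sum, Complex.exp_sum]
  refine prod_congr (by ext; simp) fun v hv => ?_
  rw [(by simpa using hv : Quotient.mk _ v = c)]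

lemma sum_prod_edgeDelta_mul {q : ℕ} (A : Finset E) (f : (V → Fin q) → ℂ) :
    ∑ σ, (∏ e ∈ A, G.edgeDelta σ e) * f σ =
      ∑ τ : G.Comp A → Fin q, f fun v => τ (Quotient.mk (G.compSetoid A) v) := by
  simp_rw [prod_edgeDelta, ite_mul, one_mul, zero_mul, ← sum_filter]
  symm
  refine Finset.sum_nbij (fun τ v => τ (Quotient.mk _ v)) (fun τ _ => ?_)
    Quotient.mk_surjective.injective_comp_right.injOn
    (fun σ hσ => ⟨Quotient.lift σ (mem_filter.1 hσ).2, mem_univ _, rfl⟩) fun _ _ => rfl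
  exact mem_filter.2 ⟨mem_univ _, fun u v huv => congrArg τ (Quotient.sound huv)⟩

lemma sum_prod_edgeDelta_mul_prod_exp {q : ℕ} (A : Finset E) (M : V → Fin q → ℂ) (β : ℂ) :
    ∑ σ : V → Fin q, (∏ e ∈ A, G.edgeDelta σ e) * ∏ v, Complex.exp (β * M v (σ v)) =
      ∏ c, ∑ α, Complex.exp (β * G.compWeight A M c α) := by
  simp_rw [sum_prod_edgeDelta_mul, Fintype.prod_sum, prod_exp_compWeight]

variable [Fintype E] in
lemma exp_energy_eq_sum {q : ℕ} (β : ℂ) (J : E → ℂ) (M : V → Fin q → ℂ) (σ : V → Fin q) :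
    Complex.exp (β * ((∑ e, J e * G.edgeDelta σ e) +
        ∑ v, ∑ α, M v α * (if α = σ v then 1 else 0))) =
      ∑ A : Finset E, (∏ e ∈ A, (Complex.exp (β * J e) - 1) * G.edgeDelta σ e) *
        ∏ v, Complex.exp (β * M v (σ v)) := by
  simp_rw [mul_ite, mul_one, mul_zero, sum_ite_eq', mem_univ, if_true, mul_add, mul_sum,
    Complex.exp_add, Complex.exp_sum, ← mul_assoc, exp_mul_edgeDelta, prod_one_add,
    powerset_univ, sum_mul]

end PGraph

theorem Zext_eq_Vpoly_eval_general {V E : Type} [Fintype V] [Fintype E]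
    (G : PGraph V E) (q : ℕ) (β : ℂ) (J : E → ℂ) (M : V → Fin q → ℂ) :
    G.Zext q β J M =
      MvPolynomial.eval (fun m : Fin q → ℂ => ∑ α : Fin q, Complex.exp (β * m α))
        (G.Vpoly M (fun e => Complex.exp (β * J e) - 1)) := by
  rw [PGraph.Zext, G.eval_Vpoly]
  simp_rw [G.exp_energy_eq_sum]
  rw [sum_comm]
  refine sum_congr rfl fun A _ => ?_
  simp_rw [prod_mul_distrib, mul_assoc, ← mul_sum, G.sum_prod_edgeDelta_mul_prod_exp]
  exact mul_comm _ _

/-- The Potts partition function with variable interactions and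
field vectors equals the evaluation of the V-polynomial at
`x_M := Σ_α e^{β M_α}` and `γ_e := e^{β J_e} − 1`. -/
theorem Zext_eq_Vpoly_eval {V E : Type} [Fintype V] [Fintype E]
    (G : PGraph V E) (q : ℕ) (hq : 1 ≤ q) (β : ℂ) (J : E → ℂ) (M : V → Fin q → ℂ) :
    G.Zext q β J M =
      MvPolynomial.eval (fun m : Fin q → ℂ => ∑ α : Fin q, Complex.exp (β * m α))
        (G.Vpoly M (fun e => Complex.exp (β * J e) - 1)) :=
  Zext_eq_Vpoly_eval_general G q β J M
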